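/- The minimum of log( N^K · max_{m ∈ {1,…,N^K}} p_m ) over all feasible distributions p for the symmetric TSC scheme equals log((1−(N−1)(D−1))/N) + K·log N. -/

import Mathlib

open Finset Real

/-- Download cost of option `m` (0-indexed: options `1,…,N` of the paper are `m < N`)
in the symmetric TSC scheme with `N` databases and `K` messages. -/
noncomputable def tscCost (N m : ℕ) : ℝ := if m < N then (N : ℝ) - 1 else (N : ℝ)

/-- `p` is a feasible query distribution for the symmetric TSC scheme with expected
normalized download cost `D`. -/
def TSCFeasible (N K : ℕ) (D : ℝ) (p : ℕ → ℝ) : Prop :=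
  (∀ m ∈ Finset.range (N ^ K), 0 ≤ p m) ∧
  (∑ m ∈ Finset.range (N ^ K), p m = 1) ∧
  (1 / ((N : ℝ) - 1)) * (∑ m ∈ Finset.range (N ^ K), p m * tscCost N m) = D

/-- The optimal distribution `p*` for the symmetric TSC scheme. -/
noncomputable def tscOpt (N K : ℕ) (D : ℝ) (m : ℕ) : ℝ :=
  if m < N then (1 - ((N : ℝ) - 1) * (D - 1)) / N
  else ((N : ℝ) - 1) * (D - 1) / ((N : ℝ) ^ K - (N : ℝ))

/-- Download cost of option `m` (0-indexed) in the alternative PIR scheme with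
message length `L`. -/
noncomputable def altCost (N L m : ℕ) : ℝ := if m < N then (L : ℝ) else (L : ℝ) + 1

/-- `p` is a feasible query distribution for the alternative PIR scheme
(`M = N (L+1)^(K-1)` options) with expected normalized download cost `D`. -/
def AltFeasible (N K L : ℕ) (D : ℝ) (p : ℕ → ℝ) : Prop :=
  (∀ m ∈ Finset.range (N * (L + 1) ^ (K - 1)), 0 ≤ p m) ∧
  (∑ m ∈ Finset.range (N * (L + 1) ^ (K - 1)), p m = 1) ∧
  (1 / (L : ℝ)) * (∑ m ∈ Finset.range (N * (L + 1) ^ (K - 1)), p m * altCost N L m) = D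

/-- The optimal distribution `q*` for the alternative PIR scheme. -/
noncomputable def altOpt (N K L : ℕ) (D : ℝ) (m : ℕ) : ℝ :=
  if m < N then (1 - (L : ℝ) * (D - 1)) / N
  else (L : ℝ) * (D - 1) / ((N : ℝ) * ((L : ℝ) + 1) ^ (K - 1) - (N : ℝ))

/-- Rényi divergence of order `α` (`0 < α`, `α ≠ 1`) of a distribution `p` on `M`
options from the uniform distribution on those options (natural logarithm). -/
noncomputable def renyiDiv (M : ℕ) (α : ℝ) (p : ℕ → ℝ) : ℝ :=
  (1 / (α - 1)) * Real.log ((M : ℝ) ^ (α - 1) * ∑ m ∈ Finset.range M, p m ^ α)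

/-- Kullback–Leibler divergence of a distribution `p` on `M` options from the uniform
distribution on those options (natural logarithm, with `0 · log 0 = 0`). -/
noncomputable def klDivUnif (M : ℕ) (p : ℕ → ℝ) : ℝ :=
  ∑ m ∈ Finset.range M, p m * Real.log ((M : ℝ) * p m)

/-- The maximum of `p` over the `M` options. -/
noncomputable def maxOver (M : ℕ) (hM : M ≠ 0) (p : ℕ → ℝ) : ℝ :=
  (Finset.range M).sup' (Finset.nonempty_range_iff.mpr hM) p

/-! The expected-cost constraint of a feasible distribution says exactly that the `N` cheap
options (cost `N - 1`) carry total mass `c = 1 - (N - 1)(D - 1)`, so some cheap option has probability at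
least `c / N`. The geometric bound on `D` gives `N ≤ c N^K`, which is what makes the
distribution `p*` (uniform with mass `c` on the cheap options, uniform with mass `1 - c` on
the others) feasible; its largest entry is `c / N`. -/

lemma sub_one_mul_sum_range_inv_pow {𝕜 : Type*} [Field 𝕜] {x : 𝕜} (hx : x ≠ 0) (K : ℕ) :
    (x - 1) * ∑ k ∈ range K, (x ^ k)⁻¹ = x * (1 - (x ^ K)⁻¹) := by
  induction K with
  | zero => simp
  | succ K ih =>
    rw [sum_range_succ, mul_add, ih, pow_succ]
    field_simp
    ring

lemma sum_range_ite_lt {M N : ℕ} (h : N ≤ M) (f g : ℕ → ℝ) :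
    ∑ m ∈ range M, (if m < N then f m else g m) = ∑ m ∈ range N, f m + ∑ m ∈ Ico N M, g m := by
  rw [← sum_range_add_sum_Ico _ h]
  congr 1
  · exact sum_congr rfl fun m hm => if_pos (mem_range.1 hm)
  · exact sum_congr rfl fun m hm => if_neg (not_lt.2 (mem_Ico.1 hm).1)

lemma sum_range_le_mul_maxOver {M N : ℕ} (h : N ≤ M) (hM : M ≠ 0) (p : ℕ → ℝ) :
    ∑ m ∈ range N, p m ≤ N * maxOver M hM p := by
  simpa using sum_le_card_nsmul (range N) p (maxOver M hM p)
    fun m hm => le_sup' p (mem_range.2 ((mem_range.1 hm).trans_le h))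

lemma sum_mul_tscCost {M N : ℕ} (h : N ≤ M) (p : ℕ → ℝ) :
    ∑ m ∈ range M, p m * tscCost N m = N * ∑ m ∈ range M, p m - ∑ m ∈ range N, p m := by
  have hcost : ∀ m, p m * tscCost N m = N * p m - if m < N then p m else 0 := by
    intro m
    unfold tscCost
    split_ifs <;> ring
  simp only [hcost, sum_sub_distrib, ← mul_sum, sum_range_ite_lt h, sum_const_zero, add_zero]

section TSC

variable {N K : ℕ} {D : ℝ}

noncomputable def tscCheapMass (N : ℕ) (D : ℝ) : ℝ := 1 - ((N : ℝ) - 1) * (D - 1)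

theorem tscFeasible_iff (hN : 1 < N) (hK : K ≠ 0) (p : ℕ → ℝ) :
    TSCFeasible N K D p ↔ (∀ m ∈ range (N ^ K), 0 ≤ p m) ∧ ∑ m ∈ range (N ^ K), p m = 1 ∧
      ∑ m ∈ range N, p m = tscCheapMass N D := by
  have hN1 : (N : ℝ) - 1 ≠ 0 := sub_ne_zero.2 (by exact_mod_cast hN.ne')
  unfold TSCFeasible tscCheapMass
  rw [sum_mul_tscCost (Nat.le_self_pow hK N)]
  refine and_congr_right fun _ => and_congr_right fun hsum => ?_
  rw [hsum]
  constructor <;> intro h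
  · field_simp at h
    linarith
  · field_simp
    linarith

lemma natCast_le_tscCheapMass_mul_pow (hN : 1 < N)
    (hD2 : D ≤ ∑ k ∈ range K, ((N : ℝ) ^ k)⁻¹) : (N : ℝ) ≤ tscCheapMass N D * N ^ K := by
  have hN0 : (0 : ℝ) < N := by positivity
  have hN1 : (0 : ℝ) ≤ N - 1 := sub_nonneg.2 (by exact_mod_cast hN.le)
  have hgeom := sub_one_mul_sum_range_inv_pow hN0.ne' K
  calc (N : ℝ) = (N - (N - 1) * ∑ k ∈ range K, ((N : ℝ) ^ k)⁻¹) * N ^ K := by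
        rw [hgeom]
        field_simp
        ring
    _ ≤ (N - (N - 1) * D) * N ^ K := by gcongr
    _ = tscCheapMass N D * N ^ K := by rw [tscCheapMass]; ring

lemma tscCheapMass_pos (hN : 1 < N) (hD2 : D ≤ ∑ k ∈ range K, ((N : ℝ) ^ k)⁻¹) :
    0 < tscCheapMass N D :=
  pos_of_mul_pos_left ((Nat.cast_pos.2 (by omega)).trans_le
    (natCast_le_tscCheapMass_mul_pow hN hD2)) (by positivity)

theorem TSCFeasible.div_le_maxOver (hN : 1 < N) (hK : K ≠ 0) (hM : N ^ K ≠ 0) {p : ℕ → ℝ}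
    (hp : TSCFeasible N K D p) : tscCheapMass N D / N ≤ maxOver (N ^ K) hM p := by
  rw [div_le_iff₀ (by positivity), ← ((tscFeasible_iff hN hK p).1 hp).2.2, mul_comm]
  exact sum_range_le_mul_maxOver (Nat.le_self_pow hK N) hM p

lemma tscOpt_of_lt {m : ℕ} (h : m < N) : tscOpt N K D m = tscCheapMass N D / N :=
  if_pos h

lemma tscOpt_of_le {m : ℕ} (h : N ≤ m) :
    tscOpt N K D m = (1 - tscCheapMass N D) / ((N : ℝ) ^ K - N) := by
  rw [tscCheapMass, sub_sub_cancel]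
  exact if_neg h.not_gt

lemma tscOpt_le (hN : 1 < N) (hK : 1 < K)
    (hD2 : D ≤ ∑ k ∈ range K, ((N : ℝ) ^ k)⁻¹) (m : ℕ) :
    tscOpt N K D m ≤ tscCheapMass N D / N := by
  have hNK : (N : ℝ) < N ^ K := lt_self_pow₀ (by exact_mod_cast hN) hK
  have hmass := natCast_le_tscCheapMass_mul_pow hN hD2
  rcases lt_or_ge m N with hm | hm
  · exact (tscOpt_of_lt hm).le
  · rw [tscOpt_of_le hm, div_le_div_iff₀ (by linarith) (by positivity)]
    nlinarith

lemma tscOpt_nonneg (hN : 1 < N) (hK : 1 < K) (hD1 : 1 ≤ D)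
    (hD2 : D ≤ ∑ k ∈ range K, ((N : ℝ) ^ k)⁻¹) (m : ℕ) : 0 ≤ tscOpt N K D m := by
  have hNK : (N : ℝ) < N ^ K := lt_self_pow₀ (by exact_mod_cast hN) hK
  have hc := tscCheapMass_pos hN hD2
  rcases lt_or_ge m N with hm | hm
  · rw [tscOpt_of_lt hm]
    positivity
  · rw [tscOpt_of_le hm]
    refine div_nonneg ?_ (by linarith)
    rw [tscCheapMass, sub_sub_cancel]
    exact mul_nonneg (sub_nonneg.2 (by exact_mod_cast hN.le)) (by linarith)

lemma maxOver_tscOpt (hN : 1 < N) (hK : 1 < K)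
    (hD2 : D ≤ ∑ k ∈ range K, ((N : ℝ) ^ k)⁻¹) (hM : N ^ K ≠ 0) :
    maxOver (N ^ K) hM (tscOpt N K D) = tscCheapMass N D / N :=
  le_antisymm (sup'_le _ _ fun m _ => tscOpt_le hN hK hD2 m)
    (tscOpt_of_lt (K := K) (D := D) (by omega : 0 < N) ▸
      le_sup' _ (mem_range.2 (Nat.pos_of_ne_zero hM)))

theorem tscFeasible_tscOpt (hN : 1 < N) (hK : 1 < K) (hD1 : 1 ≤ D)
    (hD2 : D ≤ ∑ k ∈ range K, ((N : ℝ) ^ k)⁻¹) : TSCFeasible N K D (tscOpt N K D) := by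
  have hNK : N < N ^ K := lt_self_pow₀ hN hK
  have hNK' : (N : ℝ) < N ^ K := by exact_mod_cast hNK
  have hcheap : ∑ m ∈ range N, tscOpt N K D m = tscCheapMass N D := by
    rw [sum_congr rfl fun m hm => tscOpt_of_lt (mem_range.1 hm), sum_const, card_range,
      nsmul_eq_mul]
    field_simp
  rw [tscFeasible_iff hN (by omega)]
  refine ⟨fun m _ => tscOpt_nonneg hN hK hD1 hD2 m, ?_, hcheap⟩
  rw [← sum_range_add_sum_Ico _ hNK.le, hcheap,
    sum_congr rfl fun m hm => tscOpt_of_le (mem_Ico.1 hm).1, sum_const, Nat.card_Ico,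
    nsmul_eq_mul, Nat.cast_sub hNK.le, Nat.cast_pow]
  field_simp [(sub_pos.2 hNK').ne']
  ring

end TSC

/-- the minimum of `log (N^K · max_m pₘ)` over feasible distributions
of the symmetric TSC scheme equals `log((1-(N-1)(D-1))/N) + K log N`. -/
theorem tsc_infty_tradeoff (N K : ℕ) (hN : 2 ≤ N) (hK : 2 ≤ K) (D : ℝ)
    (hD1 : 1 ≤ D) (hD2 : D ≤ ∑ k ∈ Finset.range K, ((N : ℝ) ^ k)⁻¹) :
    IsLeast
      {v : ℝ | ∃ p : ℕ → ℝ, TSCFeasible N K D p ∧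
        v = Real.log ((N : ℝ) ^ K *
          maxOver (N ^ K) (pow_ne_zero K (show N ≠ 0 by omega)) p)}
      (Real.log ((1 - ((N : ℝ) - 1) * (D - 1)) / N) + (K : ℝ) * Real.log N) := by
  have hN' : 1 < N := by omega
  have hK' : 1 < K := by omega
  have hc := tscCheapMass_pos hN' hD2
  have hNK : (0 : ℝ) < N ^ K := by positivity
  have hval : Real.log ((1 - ((N : ℝ) - 1) * (D - 1)) / N) + (K : ℝ) * Real.log N
      = Real.log (N ^ K * (tscCheapMass N D / N)) := by
    rw [Real.log_mul hNK.ne' (by positivity), Real.log_pow, tscCheapMass]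
    ring
  rw [hval]
  refine ⟨⟨tscOpt N K D, tscFeasible_tscOpt hN' hK' hD1 hD2, by rw [maxOver_tscOpt hN' hK' hD2]⟩,
    ?_⟩
  rintro _ ⟨p, hp, rfl⟩
  gcongr
  exact hp.div_le_maxOver hN' (by omega) _
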